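/- (Unlinking preserves the motivic generating series.) Let C ∈ Mat_{N×N}(ℤ) be symmetric and let a ≠ b be two indices in {1,…,N}. Define the symmetric matrix C' ∈ Mat_{(N+1)×(N+1)}(ℤ), with new index n = N+1, by: C'_{ab} = C'_{ba} = C_{ab} − 1; C'_{nn} = C_{aa} + 2C_{ab} + C_{bb} − 1; C'_{in} = C'_{ni} = C_{ai} + C_{bi} − δ_{ia} − δ_{ib} for i ≤ N; and C'_{ij} = C_{ij} for all other i,j ≤ N. Then for every d ∈ ℕ^N: (−q)^{dᵀCd}/∏_{i=1}^{N}(q²;q²)_{d_i} = Σ over all e ∈ ℕ^{N+1} satisfying e_i + (δ_{ia}+δ_{ib})·e_n = d_i for every i ≤ N, of (−q)^{eᵀC'e}·q^{−e_n}/∏_{i=1}^{N+1}(q²;q²)_{e_i} (a finite sum). Equivalently, P_C(x_1,…,x_N) = P_{C'}(x_1,…,x_N,x_n) after the substitution x_n = q^{−1} x_a x_b. -/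
import Mathlib


noncomputable section

/-- The base field `K = ℚ(q)`. -/
abbrev K : Type := RatFunc ℚ

/-- The variable `q` of `K = ℚ(q)`. -/
def qq : K := RatFunc.X

/-- The finite q-Pochhammer symbol `(α; q²)_n = ∏_{k=0}^{n-1} (1 - α q^{2k})`. -/
def qPoch (α : K) (n : ℕ) : K := ∏ k ∈ Finset.range n, (1 - α * qq ^ (2 * k))

/-- The quadratic form `dᵀ C d` of an integer matrix on a dimension vector. -/
def quadForm {N : ℕ} (C : Matrix (Fin N) (Fin N) ℤ) (d : Fin N → ℕ) : ℤ :=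
  ∑ i, ∑ j, C i j * (d i : ℤ) * (d j : ℤ)

/-- The coefficient of `x^d` in the motivic generating series of the extended
symmetric quiver with adjacency matrix `C`: `(-q)^{dᵀCd} / ∏ᵢ (q²;q²)_{dᵢ}`. -/
def Pcoeff {N : ℕ} (C : Matrix (Fin N) (Fin N) ℤ) (d : Fin N → ℕ) : K :=
  (-qq) ^ quadForm C d / ∏ i, qPoch (qq ^ 2) (d i)

lemma qq_ne_zero : qq ≠ 0 := RatFunc.X_ne_zero

lemma qq_pow_ne_one (n : ℕ) (hn : n ≠ 0) : qq ^ n ≠ 1 := by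
  intro h
  have hX : (Polynomial.X : Polynomial ℚ) ^ n = 1 := by
    apply IsFractionRing.injective (Polynomial ℚ) K
    rw [map_pow, map_one]
    simpa [qq, RatFunc.algebraMap_X] using h
  have := congrArg Polynomial.natDegree hX
  simp [Polynomial.natDegree_X_pow] at this
  exact hn this

lemma one_sub_qq_pow_ne (n : ℕ) (hn : n ≠ 0) : (1 : K) - qq ^ n ≠ 0 := by
  intro h
  exact qq_pow_ne_one n hn (by linear_combination -h)

lemma qPoch_sq_ne_zero (n : ℕ) : qPoch (qq ^ 2) n ≠ 0 := by
  apply Finset.prod_ne_zero_iff.2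
  intro k _
  have : (qq:K) ^ 2 * qq ^ (2 * k) = qq ^ (2 * k + 2) := by ring
  rw [this]
  exact one_sub_qq_pow_ne _ (by omega)

lemma qPoch_succ (n : ℕ) : qPoch (qq ^ 2) (n + 1) = qPoch (qq ^ 2) n * (1 - qq ^ (2 * (n + 1))) := by
  rw [qPoch, Finset.prod_range_succ]
  congr 2
  ring

/-- `R A k = (q²;q²)_A / (q²;q²)_{A-k}`, as a product (vanishes if `k > A`). -/
def Rk (A k : ℕ) : K := ∏ j ∈ Finset.range k, (1 - qq ^ (2 * (A - j)))

lemma Rk_zero (A : ℕ) : Rk A 0 = 1 := by simp [Rk]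

lemma Rk_succ (A k : ℕ) : Rk A (k + 1) = Rk A k * (1 - qq ^ (2 * (A - k))) := by
  rw [Rk, Finset.prod_range_succ, Rk]

lemma Rk_eq_zero_of_lt {A k : ℕ} (h : A < k) : Rk A k = 0 := by
  apply Finset.prod_eq_zero (Finset.mem_range.2 h)
  simp [Nat.sub_self]

lemma Rk_ne_zero {A k : ℕ} (h : k ≤ A) : Rk A k ≠ 0 := by
  apply Finset.prod_ne_zero_iff.2
  intro j hj
  rw [Finset.mem_range] at hj
  exact one_sub_qq_pow_ne _ (by omega)

lemma qPoch_split (m k : ℕ) :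
    qPoch (qq ^ 2) (m + k) = qPoch (qq ^ 2) m * Rk (m + k) k := by
  rw [qPoch, Finset.prod_range_add, ← qPoch]
  congr 1
  have hrefl : Rk (m + k) k
      = ∏ j ∈ Finset.range k, (1 - qq ^ (2 * (m + k - (k - 1 - j)))) :=
    (Finset.prod_range_reflect (fun j => 1 - qq ^ (2 * (m + k - j))) k).symm
  rw [hrefl]
  apply Finset.prod_congr rfl
  intro j hj
  rw [Finset.mem_range] at hj
  have h1 : m + k - (k - 1 - j) = m + j + 1 := by omega
  rw [h1]
  ring

lemma pascal (B k : ℕ) :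
    Rk (B + 1) (k + 1) = qq ^ (2 * (k + 1)) * Rk B (k + 1) + Rk B k * (1 - qq ^ (2 * (k + 1))) := by
  rcases le_or_gt k B with h | h
  · obtain ⟨m, rfl⟩ : ∃ m, B = k + m := ⟨B - k, by omega⟩
    have h1 : Rk (k + m + 1) (k + 1) = Rk (k + m) k * (1 - qq ^ (2 * (k + m + 1))) := by
      rw [Rk, Finset.prod_range_succ', Rk]
      congr 1
      apply Finset.prod_congr rfl
      intro j hj
      rw [Finset.mem_range] at hj
      congr 2
      omega
    have h2 : Rk (k + m) (k + 1) = Rk (k + m) k * (1 - qq ^ (2 * m)) := by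
      rw [Rk_succ]
      congr 3
      omega
    rw [h1, h2]
    ring
  · rw [Rk_eq_zero_of_lt (show B + 1 < k + 1 by omega),
      Rk_eq_zero_of_lt (show B < k + 1 by omega), Rk_eq_zero_of_lt h]
    ring

/-- The summand of the key identity. -/
def sTerm (A B k : ℕ) : K :=
  (-1) ^ k * qq ^ (k * k) * Rk A k * Rk B k / (qq ^ k * qPoch (qq ^ 2) k)

def uT (A B k : ℕ) : K :=
  (-1) ^ k * qq ^ (k * k) * qq ^ (2 * k) * Rk A k * Rk B k / (qq ^ k * qPoch (qq ^ 2) k)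

def vT (A B k : ℕ) : K :=
  if k = 0 then 0 else
    (-1) ^ k * qq ^ (k * k) * Rk A k * Rk B (k - 1) * (1 - qq ^ (2 * k)) /
      (qq ^ k * qPoch (qq ^ 2) k)

lemma vT_succ (A B j : ℕ) : vT A B (j + 1) =
    (-1) ^ (j + 1) * qq ^ ((j + 1) * (j + 1)) * Rk A (j + 1) * Rk B j *
      (1 - qq ^ (2 * (j + 1))) / (qq ^ (j + 1) * qPoch (qq ^ 2) (j + 1)) := by
  simp [vT]

lemma split_lemma (A B k : ℕ) : sTerm A (B + 1) k = uT A B k + vT A B k := by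
  match k with
  | 0 => simp [sTerm, uT, vT, Rk, qPoch]
  | j + 1 =>
    rw [vT_succ, sTerm, uT, pascal B j]
    ring

lemma step_lemma (A B k : ℕ) : uT A B k + vT A B (k + 1) = qq ^ (2 * A) * sTerm A B k := by
  rw [vT_succ, uT, sTerm]
  rcases le_or_gt k A with h | h
  · obtain ⟨m, rfl⟩ : ∃ m, A = k + m := ⟨A - k, by omega⟩
    have hR : Rk (k + m) (k + 1) = Rk (k + m) k * (1 - qq ^ (2 * m)) := by
      rw [Rk_succ]; congr 3; omega
    rw [hR, qPoch_succ]
    have h1 : (qq : K) ≠ 0 := qq_ne_zero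
    have h2 : qPoch (qq ^ 2) k ≠ 0 := qPoch_sq_ne_zero k
    set s : K := qq ^ (2 * (k + 1)) with hs
    have h3 : (1 : K) - s ≠ 0 := one_sub_qq_pow_ne _ (by omega)
    field_simp
    ring
  · rw [Rk_eq_zero_of_lt h, Rk_eq_zero_of_lt (show A < k + 1 by omega)]
    simp

lemma key0 (A B : ℕ) :
    ∑ k ∈ Finset.range (B + 1), sTerm A B k = qq ^ (2 * (A * B)) := by
  induction B with
  | zero => simp [sTerm, Rk, qPoch]
  | succ B ih =>
    have hU : ∑ k ∈ Finset.range (B + 2), uT A B k = ∑ k ∈ Finset.range (B + 1), uT A B k := by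
      rw [Finset.sum_range_succ]
      have hu0 : uT A B (B + 1) = 0 := by
        rw [uT, Rk_eq_zero_of_lt (show B < B + 1 by omega)]; simp
      rw [hu0, add_zero]
    have hV : ∑ k ∈ Finset.range (B + 2), vT A B k
        = ∑ k ∈ Finset.range (B + 1), vT A B (k + 1) := by
      rw [Finset.sum_range_succ']
      simp [vT]
    calc ∑ k ∈ Finset.range (B + 2), sTerm A (B + 1) k
        = ∑ k ∈ Finset.range (B + 2), (uT A B k + vT A B k) :=
          Finset.sum_congr rfl fun k _ => split_lemma A B k
      _ = (∑ k ∈ Finset.range (B + 2), uT A B k) + ∑ k ∈ Finset.range (B + 2), vT A B k :=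
          Finset.sum_add_distrib
      _ = (∑ k ∈ Finset.range (B + 1), uT A B k) + ∑ k ∈ Finset.range (B + 1), vT A B (k + 1) := by
          rw [hU, hV]
      _ = ∑ k ∈ Finset.range (B + 1), (uT A B k + vT A B (k + 1)) := Finset.sum_add_distrib.symm
      _ = ∑ k ∈ Finset.range (B + 1), qq ^ (2 * A) * sTerm A B k :=
          Finset.sum_congr rfl fun k _ => step_lemma A B k
      _ = qq ^ (2 * A) * ∑ k ∈ Finset.range (B + 1), sTerm A B k := by rw [Finset.mul_sum]
      _ = qq ^ (2 * (A * (B + 1))) := by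
          rw [ih, ← pow_add]
          congr 1
          ring

lemma sTerm_eq_zero {A B k : ℕ} (h : min A B < k) : sTerm A B k = 0 := by
  rcases Nat.lt_or_ge A k with h1 | h1
  · rw [sTerm, Rk_eq_zero_of_lt h1]; simp
  · rw [sTerm, Rk_eq_zero_of_lt (show B < k by omega)]; simp

lemma key (A B n : ℕ) (h : min A B < n) :
    ∑ k ∈ Finset.range n, sTerm A B k = qq ^ (2 * (A * B)) := by
  have e1 : ∑ k ∈ Finset.range (min A B + 1), sTerm A B k
      = ∑ k ∈ Finset.range n, sTerm A B k := by
    apply Finset.sum_subset (Finset.range_subset_range.2 (by omega))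
    intro k _ hk
    rw [Finset.mem_range] at hk
    exact sTerm_eq_zero (by omega)
  have e2 : ∑ k ∈ Finset.range (min A B + 1), sTerm A B k
      = ∑ k ∈ Finset.range (B + 1), sTerm A B k := by
    apply Finset.sum_subset (Finset.range_subset_range.2 (by omega))
    intro k _ hk
    rw [Finset.mem_range] at hk
    exact sTerm_eq_zero (by omega)
  rw [← e1, e2, key0]

lemma sum_delta {N : ℕ} (a b : Fin N) (g : Fin N → ℤ) :
    ∑ i, ((if i = a then (1:ℤ) else 0) + (if i = b then 1 else 0)) * g i = g a + g b := by
  have h : ∀ i, ((if i = a then (1:ℤ) else 0) + (if i = b then 1 else 0)) * g i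
      = (if i = a then g i else 0) + (if i = b then g i else 0) := by
    intro i; split_ifs <;> ring
  rw [Finset.sum_congr rfl fun i _ => h i, Finset.sum_add_distrib,
    Finset.sum_ite_eq' Finset.univ a g, Finset.sum_ite_eq' Finset.univ b g]
  simp

lemma quad_eq (N : ℕ) (C : Matrix (Fin N) (Fin N) ℤ) (hC : C.IsSymm)
    (a b : Fin N) (hab : a ≠ b)
    (C' : Matrix (Fin (N + 1)) (Fin (N + 1)) ℤ)
    (hC'ab : C' a.castSucc b.castSucc = C a b - 1)
    (hC'ba : C' b.castSucc a.castSucc = C a b - 1)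
    (hC'nn : C' (Fin.last N) (Fin.last N) = C a a + 2 * C a b + C b b - 1)
    (hC'in : ∀ i : Fin N, C' i.castSucc (Fin.last N) =
      C a i + C b i - (if i = a then 1 else 0) - (if i = b then 1 else 0))
    (hC'ni : ∀ i : Fin N, C' (Fin.last N) i.castSucc =
      C a i + C b i - (if i = a then 1 else 0) - (if i = b then 1 else 0))
    (hC'ij : ∀ i j : Fin N, ¬(i = a ∧ j = b) → ¬(i = b ∧ j = a) →
      C' i.castSucc j.castSucc = C i j)
    (d : Fin N → ℕ) (k : ℕ) (hka : k ≤ d a) (hkb : k ≤ d b) :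
    quadForm C'
      (Fin.snoc (fun i => d i - k * ((if i = a then 1 else 0) + (if i = b then 1 else 0))) k)
      = quadForm C d + (k : ℤ) * k - 2 * (d a) * (d b) := by
  classical
  have hsym : ∀ i j, C j i = C i j := fun i j => hC.apply i j
  set κ : ℤ := (k : ℤ) with hκ
  set z : Fin N → ℤ :=
    fun i => (d i : ℤ) - κ * ((if i = a then (1:ℤ) else 0) + (if i = b then 1 else 0)) with hzdef
  set e : Fin (N + 1) → ℕ :=
    Fin.snoc (fun i => d i - k * ((if i = a then 1 else 0) + (if i = b then 1 else 0))) k with he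
  have hecast : ∀ i : Fin N, ((e i.castSucc : ℕ) : ℤ) = z i := by
    intro i
    simp only [he, Fin.snoc_castSucc, hzdef, hκ]
    rcases eq_or_ne i a with rfl | hia
    · simp [hab] <;> omega
    · rcases eq_or_ne i b with rfl | hib
      · simp [hia] <;> omega
      · simp [hia, hib] <;> omega
  have hl : ((e (Fin.last N) : ℕ) : ℤ) = κ := by simp [he, Fin.snoc_last, hκ]
  have hza : z a = (d a : ℤ) - κ := by simp [hzdef, hab]
  have hzb : z b = (d b : ℤ) - κ := by simp [hzdef, Ne.symm hab]
  -- generic linearization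
  have hzlin : ∀ c : Fin N → ℤ,
      ∑ i, c i * z i = (∑ i, c i * (d i : ℤ)) - κ * (c a + c b) := by
    intro c
    have h1 : ∀ i, c i * z i
        = c i * d i - κ * (((if i = a then (1:ℤ) else 0) + (if i = b then 1 else 0)) * c i) := by
      intro i; simp only [hzdef]; ring
    rw [Finset.sum_congr rfl fun i _ => h1 i, Finset.sum_sub_distrib, ← Finset.mul_sum,
      sum_delta a b c]
  set g : Fin N → ℤ := fun i => ∑ j, (C i j : ℤ) * (d j : ℤ) with hg
  set G : ℤ := g a + g b with hG
  set V : ℤ := (C a a + C a b) + (C b a + C b b) with hV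
  have hD : ∑ i, g i * (d i : ℤ) = quadForm C d := by
    rw [quadForm]
    apply Finset.sum_congr rfl
    intro i _
    rw [hg, Finset.sum_mul]
    apply Finset.sum_congr rfl
    intro j _
    ring
  have hGW : ∑ i, ((C a i : ℤ) + C b i) * (d i : ℤ) = G := by
    have h1 : ∀ i, ((C a i : ℤ) + C b i) * (d i : ℤ)
        = C a i * d i + C b i * d i := fun i => by ring
    rw [Finset.sum_congr rfl fun i _ => h1 i, Finset.sum_add_distrib, hG, hg]
  have hGW2 : ∑ i, ((C i a : ℤ) + C i b) * (d i : ℤ) = G := by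
    rw [← hGW]
    apply Finset.sum_congr rfl
    intro i _
    rw [hsym i a, hsym i b]
  -- row/column sums with the last index
  have hrowlem : ∑ i, (C' i.castSucc (Fin.last N) : ℤ) * z i = G - κ * V - (z a + z b) := by
    have h1 : ∀ i, (C' i.castSucc (Fin.last N) : ℤ) * z i
        = ((C a i : ℤ) + C b i) * z i
          - ((if i = a then (1:ℤ) else 0) + (if i = b then 1 else 0)) * z i := by
      intro i
      rw [hC'in i]
      ring
    rw [Finset.sum_congr rfl fun i _ => h1 i, Finset.sum_sub_distrib, sum_delta a b z,
      hzlin (fun i => (C a i : ℤ) + C b i), hGW]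
    rw [hV]
    ring
  have hcollem : ∑ i, (C' (Fin.last N) i.castSucc : ℤ) * z i = G - κ * V - (z a + z b) := by
    have h1 : ∀ i, (C' (Fin.last N) i.castSucc : ℤ) * z i
        = ((C a i : ℤ) + C b i) * z i
          - ((if i = a then (1:ℤ) else 0) + (if i = b then 1 else 0)) * z i := by
      intro i
      rw [hC'ni i]
      ring
    rw [Finset.sum_congr rfl fun i _ => h1 i, Finset.sum_sub_distrib, sum_delta a b z,
      hzlin (fun i => (C a i : ℤ) + C b i), hGW]
    rw [hV]
    ring
  -- the C double sum
  have hCzz : ∑ i, ∑ j, (C i j : ℤ) * z i * z j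
      = quadForm C d - 2 * κ * G + κ * κ * V := by
    have hrow : ∀ i, ∑ j, (C i j : ℤ) * z i * z j
        = g i * z i - κ * (((C i a : ℤ) + C i b) * z i) := by
      intro i
      have h2 : ∑ j, (C i j : ℤ) * z i * z j = z i * ∑ j, (C i j : ℤ) * z j := by
        rw [Finset.mul_sum]
        apply Finset.sum_congr rfl
        intro j _
        ring
      rw [h2, hzlin (fun j => (C i j : ℤ))]
      simp only [hg]
      ring
    rw [Finset.sum_congr rfl fun i _ => hrow i, Finset.sum_sub_distrib, ← Finset.mul_sum,
      hzlin g, hzlin (fun i => (C i a : ℤ) + C i b), hD, hGW2, ← hG]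
    have : (C a a : ℤ) + C a b + (C b a + C b b) = V := by rw [hV]
    rw [this]
    ring
  -- the C' double sum
  have hdiff : ∀ i j, (C' i.castSucc j.castSucc : ℤ)
      = C i j + ((if i = a ∧ j = b then (-1:ℤ) else 0) + (if i = b ∧ j = a then (-1:ℤ) else 0)) := by
    intro i j
    by_cases h1 : i = a ∧ j = b
    · have h2 : ¬(i = b ∧ j = a) := fun h => hab (h1.1.symm.trans h.1)
      rw [if_pos h1, if_neg h2, h1.1, h1.2, hC'ab]
      ring
    · by_cases h2 : i = b ∧ j = a
      · rw [if_neg h1, if_pos h2, h2.1, h2.2, hC'ba, hsym a b]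
        ring
      · rw [hC'ij i j h1 h2, if_neg h1, if_neg h2]
        ring
  have hab' : ∑ i, ∑ j, (if i = a ∧ j = b then (-1:ℤ) else 0) * z i * z j = -(z a * z b) := by
    have hinner : ∀ i, ∑ j, (if i = a ∧ j = b then (-1:ℤ) else 0) * z i * z j
        = if i = a then -(z i * z b) else 0 := by
      intro i
      by_cases hia : i = a
      · rw [if_pos hia]
        have h3 : ∀ j, (if i = a ∧ j = b then (-1:ℤ) else 0) * z i * z j
            = if j = b then -(z i * z j) else 0 := by
          intro j
          by_cases hjb : j = b
          · rw [if_pos ⟨hia, hjb⟩, if_pos hjb]; ring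
          · rw [if_neg (fun h => hjb h.2), if_neg hjb]; ring
        rw [Finset.sum_congr rfl fun j _ => h3 j,
          Finset.sum_ite_eq' Finset.univ b (fun j => -(z i * z j))]
        simp
      · have h3 : ∀ j, (if i = a ∧ j = b then (-1:ℤ) else 0) * z i * z j = 0 := by
          intro j
          rw [if_neg (fun h => hia h.1)]
          ring
        rw [Finset.sum_congr rfl fun j _ => h3 j, if_neg hia]
        simp
    rw [Finset.sum_congr rfl fun i _ => hinner i,
      Finset.sum_ite_eq' Finset.univ a (fun i => -(z i * z b))]
    simp
  have hba' : ∑ i, ∑ j, (if i = b ∧ j = a then (-1:ℤ) else 0) * z i * z j = -(z b * z a) := by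
    have hinner : ∀ i, ∑ j, (if i = b ∧ j = a then (-1:ℤ) else 0) * z i * z j
        = if i = b then -(z i * z a) else 0 := by
      intro i
      by_cases hib : i = b
      · rw [if_pos hib]
        have h3 : ∀ j, (if i = b ∧ j = a then (-1:ℤ) else 0) * z i * z j
            = if j = a then -(z i * z j) else 0 := by
          intro j
          by_cases hja : j = a
          · rw [if_pos ⟨hib, hja⟩, if_pos hja]; ring
          · rw [if_neg (fun h => hja h.2), if_neg hja]; ring
        rw [Finset.sum_congr rfl fun j _ => h3 j,
          Finset.sum_ite_eq' Finset.univ a (fun j => -(z i * z j))]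
        simp
      · have h3 : ∀ j, (if i = b ∧ j = a then (-1:ℤ) else 0) * z i * z j = 0 := by
          intro j
          rw [if_neg (fun h => hib h.1)]
          ring
        rw [Finset.sum_congr rfl fun j _ => h3 j, if_neg hib]
        simp
    rw [Finset.sum_congr rfl fun i _ => hinner i,
      Finset.sum_ite_eq' Finset.univ b (fun i => -(z i * z a))]
    simp
  have hC'zz : ∑ i, ∑ j, (C' i.castSucc j.castSucc : ℤ) * z i * z j
      = (quadForm C d - 2 * κ * G + κ * κ * V) - z a * z b - z b * z a := by
    have h1 : ∀ i j, (C' i.castSucc j.castSucc : ℤ) * z i * z j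
        = (C i j : ℤ) * z i * z j + ((if i = a ∧ j = b then (-1:ℤ) else 0) * z i * z j
          + (if i = b ∧ j = a then (-1:ℤ) else 0) * z i * z j) := by
      intro i j
      rw [hdiff i j]
      ring
    have h2 : ∀ i, ∑ j, (C' i.castSucc j.castSucc : ℤ) * z i * z j
        = (∑ j, (C i j : ℤ) * z i * z j) + ((∑ j, (if i = a ∧ j = b then (-1:ℤ) else 0) * z i * z j)
          + (∑ j, (if i = b ∧ j = a then (-1:ℤ) else 0) * z i * z j)) := by
      intro i
      rw [Finset.sum_congr rfl fun j _ => h1 i j, Finset.sum_add_distrib, Finset.sum_add_distrib]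
    rw [Finset.sum_congr rfl fun i _ => h2 i, Finset.sum_add_distrib, Finset.sum_add_distrib,
      hCzz, hab', hba']
    ring
  -- assemble
  have hsum : quadForm C' e
      = (∑ i, ∑ j, (C' i.castSucc j.castSucc : ℤ) * z i * z j)
        + (∑ i, (C' i.castSucc (Fin.last N) : ℤ) * z i) * κ
        + ((∑ j, (C' (Fin.last N) j.castSucc : ℤ) * κ * z j)
        + (C' (Fin.last N) (Fin.last N) : ℤ) * κ * κ) := by
    rw [quadForm, Fin.sum_univ_castSucc]
    simp only [Fin.sum_univ_castSucc, hecast, hl]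
    rw [Finset.sum_add_distrib, ← Finset.sum_mul]
  have hcol2 : ∑ j, (C' (Fin.last N) j.castSucc : ℤ) * κ * z j
      = κ * ∑ j, (C' (Fin.last N) j.castSucc : ℤ) * z j := by
    rw [Finset.mul_sum]
    apply Finset.sum_congr rfl
    intro j _
    ring
  rw [hsum, hC'zz, hrowlem, hcol2, hcollem, hC'nn, hza, hzb]
  linear_combination (κ * κ : ℤ) * hsym b a


lemma neg_qq_ne_zero : (-qq : K) ≠ 0 := neg_ne_zero.2 qq_ne_zero

lemma neg_one_pow_sq (k : ℕ) : ((-1 : K)) ^ (k * k) = (-1) ^ k := by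
  rcases Nat.even_or_odd k with hk | hk
  · rw [hk.neg_one_pow, (Nat.even_mul.2 (Or.inl hk)).neg_one_pow]
  · rw [hk.neg_one_pow, (hk.mul hk).neg_one_pow]

/-- **Unlinking preserves the motivic generating series (Theorem 2.4, Ekholm–Kucharski–Longhi).**
Unlinking the nodes `a ≠ b` of `C` yields the quiver `C'` on `N+1` nodes described below,
and `P_C(x_1,…,x_N) = P_{C'}(x_1,…,x_N,x_n)` after the substitution `x_n = q⁻¹ x_a x_b`,
expressed coefficientwise. -/
theorem statement2 (N : ℕ) (C : Matrix (Fin N) (Fin N) ℤ) (hC : C.IsSymm)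
    (a b : Fin N) (hab : a ≠ b)
    (C' : Matrix (Fin (N + 1)) (Fin (N + 1)) ℤ)
    (hC'ab : C' a.castSucc b.castSucc = C a b - 1)
    (hC'ba : C' b.castSucc a.castSucc = C a b - 1)
    (hC'nn : C' (Fin.last N) (Fin.last N) = C a a + 2 * C a b + C b b - 1)
    (hC'in : ∀ i : Fin N, C' i.castSucc (Fin.last N) =
      C a i + C b i - (if i = a then 1 else 0) - (if i = b then 1 else 0))
    (hC'ni : ∀ i : Fin N, C' (Fin.last N) i.castSucc =
      C a i + C b i - (if i = a then 1 else 0) - (if i = b then 1 else 0))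
    (hC'ij : ∀ i j : Fin N, ¬(i = a ∧ j = b) → ¬(i = b ∧ j = a) →
      C' i.castSucc j.castSucc = C i j) :
    ∀ d : Fin N → ℕ,
      Pcoeff C d =
        ∑ᶠ e : Fin (N + 1) → ℕ,
          if ∀ i : Fin N,
              e i.castSucc + ((if i = a then 1 else 0) + (if i = b then 1 else 0)) *
                e (Fin.last N) = d i then
            (-qq) ^ quadForm C' e * qq ^ (-(e (Fin.last N) : ℤ)) /
              ∏ i, qPoch (qq ^ 2) (e i)
          else 0 := by
  intro d
  classical
  set m : ℕ := min (d a) (d b) with hm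
  set eF : ℕ → (Fin (N + 1) → ℕ) := fun k =>
    Fin.snoc (fun i => d i - k * ((if i = a then 1 else 0) + (if i = b then 1 else 0))) k
    with heF
  set F : (Fin (N + 1) → ℕ) → K := fun e =>
    if ∀ i : Fin N,
        e i.castSucc + ((if i = a then 1 else 0) + (if i = b then 1 else 0)) *
          e (Fin.last N) = d i then
      (-qq) ^ quadForm C' e * qq ^ (-(e (Fin.last N) : ℤ)) / ∏ i, qPoch (qq ^ 2) (e i)
    else 0 with hF
  have heFc : ∀ k (i : Fin N), eF k i.castSucc
      = d i - k * ((if i = a then 1 else 0) + (if i = b then 1 else 0)) := by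
    intro k i
    rw [heF]
    exact Fin.snoc_castSucc _ _ _
  have heFl : ∀ k, eF k (Fin.last N) = k := by
    intro k
    rw [heF]
    exact Fin.snoc_last _ _
  -- support of F
  have hsupp : Function.support F ⊆ ↑((Finset.range (m + 1)).image eF) := by
    intro e he
    rw [Function.mem_support] at he
    by_cases hcond : ∀ i : Fin N,
        e i.castSucc + ((if i = a then 1 else 0) + (if i = b then 1 else 0)) *
          e (Fin.last N) = d i
    · have hka : e (Fin.last N) ≤ d a := by
        have h := hcond a
        rw [if_pos rfl, if_neg hab] at h
        omega
      have hkb : e (Fin.last N) ≤ d b := by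
        have h := hcond b
        rw [if_neg (Ne.symm hab), if_pos rfl] at h
        omega
      rw [Finset.coe_image, Set.mem_image]
      refine ⟨e (Fin.last N), by simp only [Finset.mem_coe, Finset.mem_range]; omega, ?_⟩
      funext x
      refine Fin.lastCases ?_ ?_ x
      · rw [heFl]
      · intro i
        rw [heFc]
        have h := hcond i
        rw [mul_comm]
        omega
    · exact absurd (by rw [hF]; exact if_neg hcond) he
  have hinj : ∀ k1 ∈ Finset.range (m + 1), ∀ k2 ∈ Finset.range (m + 1),
      eF k1 = eF k2 → k1 = k2 := by
    intro k1 _ k2 _ h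
    have := congrFun h (Fin.last N)
    rwa [heFl, heFl] at this
  rw [finsum_eq_sum_of_support_subset F hsupp, Finset.sum_image hinj]
  -- per-term computation
  have hterm : ∀ k ∈ Finset.range (m + 1),
      F (eF k) = Pcoeff C d / qq ^ (2 * (d a * d b)) * sTerm (d a) (d b) k := by
    intro k hk
    rw [Finset.mem_range] at hk
    have hka : k ≤ d a := by omega
    have hkb : k ≤ d b := by omega
    have hcond : ∀ i : Fin N,
        (eF k) i.castSucc + ((if i = a then 1 else 0) + (if i = b then 1 else 0)) *
          (eF k) (Fin.last N) = d i := by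
      intro i
      rw [heFc, heFl]
      rcases eq_or_ne i a with rfl | hia
      · simp [hab] <;> omega
      · rcases eq_or_ne i b with rfl | hib
        · simp [hia] <;> omega
        · simp [hia, hib]
    have hlast : (eF k) (Fin.last N) = k := heFl k
    have hquad : quadForm C' (eF k) = quadForm C d + (k : ℤ) * k - 2 * (d a) * (d b) := by
      rw [heF]
      exact quad_eq N C hC a b hab C' hC'ab hC'ba hC'nn hC'in hC'ni hC'ij d k hka hkb
    rw [hF]
    show (if _ then _ else _) = _
    rw [if_pos hcond, hquad, hlast]
    -- denominator
    have hprodsplit : ∏ i : Fin (N + 1), qPoch (qq ^ 2) (eF k i)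
        = (∏ i : Fin N, qPoch (qq ^ 2) ((eF k) i.castSucc)) * qPoch (qq ^ 2) k := by
      rw [Fin.prod_univ_castSucc, hlast]
    have hden : ∏ i : Fin N, qPoch (qq ^ 2) (d i)
        = (∏ i : Fin N, qPoch (qq ^ 2) ((eF k) i.castSucc)) * (Rk (d a) k * Rk (d b) k) := by
      have hsplit : ∀ i : Fin N, qPoch (qq ^ 2) (d i)
          = qPoch (qq ^ 2) ((eF k) i.castSucc) *
            (if i = a then Rk (d a) k else if i = b then Rk (d b) k else 1) := by
        intro i
        rw [heFc]
        rcases eq_or_ne i a with rfl | hia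
        · rw [if_pos rfl, if_neg hab, if_pos rfl]
          have h1 : d i - k * (1 + 0) = d i - k := by omega
          rw [h1]
          calc qPoch (qq ^ 2) (d i) = qPoch (qq ^ 2) ((d i - k) + k) := by congr 1; omega
            _ = qPoch (qq ^ 2) (d i - k) * Rk ((d i - k) + k) k := qPoch_split _ _
            _ = qPoch (qq ^ 2) (d i - k) * Rk (d i) k := by
                congr 2
                omega
        · rcases eq_or_ne i b with rfl | hib
          · rw [if_neg hia, if_pos rfl, if_neg hia, if_pos rfl]
            have h1 : d i - k * (0 + 1) = d i - k := by omega
            rw [h1]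
            calc qPoch (qq ^ 2) (d i) = qPoch (qq ^ 2) ((d i - k) + k) := by congr 1; omega
              _ = qPoch (qq ^ 2) (d i - k) * Rk ((d i - k) + k) k := qPoch_split _ _
              _ = qPoch (qq ^ 2) (d i - k) * Rk (d i) k := by
                  congr 2
                  omega
          · rw [if_neg hia, if_neg hib, if_neg hia, if_neg hib]
            have h1 : d i - k * (0 + 0) = d i := by omega
            rw [h1, mul_one]
      rw [Finset.prod_congr rfl fun i _ => hsplit i, Finset.prod_mul_distrib]
      congr 1
      have h2 : ∏ i : Fin N, (if i = a then Rk (d a) k else if i = b then Rk (d b) k else 1)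
          = ∏ i ∈ ({a, b} : Finset (Fin N)),
              (if i = a then Rk (d a) k else if i = b then Rk (d b) k else 1) := by
        symm
        apply Finset.prod_subset (Finset.subset_univ _)
        intro x _ hx
        simp only [Finset.mem_insert, Finset.mem_singleton] at hx
        push_neg at hx
        rw [if_neg hx.1, if_neg hx.2]
      rw [h2, Finset.prod_pair hab, if_pos rfl, if_neg (Ne.symm hab), if_pos rfl]
    -- zpow manipulation
    have hzpow : (-qq : K) ^ (quadForm C d + (k : ℤ) * k - 2 * (d a) * (d b)) * qq ^ (-(k : ℤ))
        = (-qq) ^ quadForm C d * ((-1) ^ k * qq ^ (k * k))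
          / (qq ^ (2 * (d a * d b)) * qq ^ k) := by
      have hA : (-qq : K) ^ ((2 : ℤ) * (d a) * (d b)) = qq ^ (2 * (d a * d b)) := by
        have h2 : ((2 : ℤ) * (d a) * (d b)) = ((2 * (d a * d b) : ℕ) : ℤ) := by push_cast; ring
        rw [h2, zpow_natCast, Even.neg_pow ⟨d a * d b, by ring⟩]
      have hk2 : (-qq : K) ^ ((k : ℤ) * k) = (-1) ^ k * qq ^ (k * k) := by
        have h1 : ((k : ℤ) * k) = ((k * k : ℕ) : ℤ) := by push_cast; ring
        rw [h1, zpow_natCast, neg_pow, neg_one_pow_sq]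
      rw [zpow_sub₀ neg_qq_ne_zero, zpow_add₀ neg_qq_ne_zero, hk2, hA, zpow_neg, zpow_natCast,
        ← div_eq_mul_inv, div_div]
    rw [hzpow, hprodsplit, div_div, Pcoeff, hden, div_div, sTerm, div_mul_div_comm]
    have hE : (∏ i : Fin N, qPoch (qq ^ 2) ((eF k) i.castSucc)) ≠ 0 :=
      Finset.prod_ne_zero_iff.2 fun i _ => qPoch_sq_ne_zero _
    have hP : qPoch (qq ^ 2) k ≠ 0 := qPoch_sq_ne_zero k
    have hRA : Rk (d a) k ≠ 0 := Rk_ne_zero hka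
    have hRB : Rk (d b) k ≠ 0 := Rk_ne_zero hkb
    have hq : (qq : K) ≠ 0 := qq_ne_zero
    have hQk : (qq : K) ^ k ≠ 0 := pow_ne_zero _ hq
    have hW : (qq : K) ^ (2 * (d a * d b)) ≠ 0 := pow_ne_zero _ hq
    rw [div_eq_div_iff (by simp [mul_eq_zero, hE, hP, hW, hQk])
      (by simp [mul_eq_zero, hE, hP, hRA, hRB, hW, hQk])]
    ring
  rw [Finset.sum_congr rfl hterm, ← Finset.mul_sum, key (d a) (d b) (m + 1) (by omega),
    div_mul_cancel₀ _ (pow_ne_zero _ qq_ne_zero)]
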